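/- The only injective affine map f : ℝ² → ℝ² with f(K) = K is the identity. -/

import Mathlib

/-! The convex hull of `K` is the triangle `tri`, so an injective affine map `f` with `f '' K = K`
maps `tri` onto itself and permutes its extreme points, the vertices `4, B, 0`. The point `3/8` of
the way from the `i`-th to the `j`-th vertex lies in `K` exactly when `i ≤ j` (non-membership is
seen one level down, as `K ⊆ ⋃ i, mainS i '' tri`). Since `f` commutes with `lineMap`, the induced
permutation of the vertices is monotone, hence trivial, and an affine map fixing an affine basis is
the identity. -/

open Set Complex

/-- `K` is the attractor (invariant nonempty compact set) of the system `S`. -/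
def IsAttractor {X : Type*} [MetricSpace X] {m : ℕ} (S : Fin m → X → X) (K : Set X) : Prop :=
  K.Nonempty ∧ IsCompact K ∧ K = ⋃ i, S i '' K

/-- The five similarities of the main example, in the plane `ℝ² ≃ ℂ`:
`S₂ x = x/2 + (2,0)`, `S_k x = x/4 + a_k` for `a₁=(0,0)`, `a₃=(3,0)`,
`a₄=(1,√3)`, `a₅=(3/2, 3√3/2)`. -/
noncomputable def mainS : Fin 5 → ℂ → ℂ :=
  ![fun w => w / 4,
    fun w => w / 2 + 2,
    fun w => w / 4 + 3,
    fun w => w / 4 + (1 + Real.sqrt 3 * Complex.I),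
    fun w => w / 4 + (3 / 2 + (3 * Real.sqrt 3 / 2) * Complex.I)]

/-- The closed triangle with vertices `A=(0,0)`, `B=(2,2√3)`, `C=(4,0)`. -/
noncomputable def tri : Set ℂ :=
  convexHull ℝ {0, 2 + 2 * Real.sqrt 3 * Complex.I, 4}

open Function Metric
open scoped NNReal

section Attractor

variable {X : Type*} [MetricSpace X] {m : ℕ} {S : Fin m → X → X} {K : Set X}

theorem IsAttractor.mapsTo (hK : IsAttractor S K) (i : Fin m) : MapsTo (S i) K K := fun x hx => by
  rw [hK.2.2]
  exact mem_iUnion_of_mem i (mem_image_of_mem _ hx)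

theorem IsAttractor.mem_of_isFixedPt [CompleteSpace X] (hK : IsAttractor S K) {i : Fin m}
    {r : ℝ≥0} (hS : ContractingWith r (S i)) {p : X} (hp : IsFixedPt (S i) p) : p ∈ K := by
  obtain ⟨x, hx⟩ := hK.1
  have : Nonempty X := ⟨x⟩
  rw [hS.fixedPoint_unique hp]
  exact hK.2.1.isClosed.mem_of_tendsto (hS.tendsto_iterate_fixedPoint x)
    (Filter.Eventually.of_forall fun n => (hK.mapsTo i).iterate n hx)

theorem IsAttractor.subset_of_mapsTo [ProperSpace X] (hK : IsAttractor S K) {r : ℝ≥0}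
    (hS : ∀ i, ContractingWith r (S i)) {C : Set X} (hC : IsClosed C) (hCne : C.Nonempty)
    (hSC : ∀ i, MapsTo (S i) C C) : K ⊆ C := by
  obtain ⟨hne, hcomp, heq⟩ := hK
  obtain ⟨x₀, hx₀, hmax⟩ := hcomp.exists_isMaxOn hne (continuous_infDist_pt C).continuousOn
  obtain ⟨i, y, hy, rfl⟩ : ∃ i, ∃ y ∈ K, S i y = x₀ := by rw [heq] at hx₀; simpa using hx₀
  have hcontract : infDist (S i y) C ≤ r * infDist (S i y) C := by
    obtain ⟨c, hc, hyc⟩ := hC.exists_infDist_eq_dist hCne y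
    calc infDist (S i y) C ≤ dist (S i y) (S i c) := infDist_le_dist_of_mem (hSC i hc)
      _ ≤ r * dist y c := (hS i).2.dist_le_mul y c
      _ = r * infDist y C := by rw [hyc]
      _ ≤ r * infDist (S i y) C := by gcongr; exact hmax hy
  have hzero : infDist (S i y) C = 0 := by
    have hr : (r : ℝ) < 1 := (hS i).1
    nlinarith [infDist_nonneg (x := S i y) (s := C)]
  intro x hx
  exact (hC.mem_iff_infDist_zero hCne).2 (le_antisymm (hzero ▸ hmax hx) infDist_nonneg)

end Attractor

theorem AffineMap.mapsTo_extremePoints {𝕜 E F : Type*} [Ring 𝕜] [PartialOrder 𝕜]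
    [AddRightMono 𝕜] [AddCommGroup E] [AddCommGroup F] [Module 𝕜 E] [Module 𝕜 F]
    (f : E →ᵃ[𝕜] F) (hf : Injective f) (s : Set E) :
    MapsTo f (s.extremePoints 𝕜) ((f '' s).extremePoints 𝕜) := by
  rintro x ⟨hxs, hx⟩
  refine ⟨mem_image_of_mem f hxs, ?_⟩
  rintro _ ⟨a, ha, rfl⟩ _ ⟨b, hb, rfl⟩ hab
  rw [← image_openSegment] at hab
  obtain ⟨y, hy, hyx⟩ := hab
  rw [hx ha hb (hf hyx ▸ hy)]

theorem AffineBasis.mem_extremePoints_convexHull {𝕜 E ι : Type*} [Field 𝕜] [LinearOrder 𝕜]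
    [IsStrictOrderedRing 𝕜] [AddCommGroup E] [Module 𝕜 E] [Fintype ι] (b : AffineBasis ι 𝕜 E)
    (i : ι) : b i ∈ (convexHull 𝕜 (range b)).extremePoints 𝕜 := by
  classical
  rw [b.convexHull_eq_nonneg_coord]
  refine ⟨fun j => by rw [b.coord_apply]; split_ifs <;> norm_num, ?_⟩
  rintro x hx y hy ⟨s, t, hs, ht, hst, hxy⟩
  have hcoord : ∀ j ≠ i, b.coord j x = 0 := fun j hj => by
    have h := congrArg (b.coord j) hxy
    rw [Convex.combo_affine_apply hst, b.coord_apply_ne hj, smul_eq_mul, smul_eq_mul] at h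
    have hsx := ((add_eq_zero_iff_of_nonneg (mul_nonneg hs.le (hx j))
      (mul_nonneg ht.le (hy j))).1 h).1
    exact (mul_eq_zero.1 hsx).resolve_left hs.ne'
  refine b.ext_elem fun j => ?_
  by_cases hj : j = i
  · subst hj
    rw [b.coord_apply_eq, ← b.sum_coord_apply_eq_one x,
      Finset.sum_eq_single j (fun k _ hk => hcoord k hk) (by simp)]
  · rw [hcoord j hj, b.coord_apply_ne hj]

noncomputable def triVertex : Fin 3 → ℂ := ![4, 2 + 2 * Real.sqrt 3 * I, 0]

theorem tri_eq_convexHull_range : tri = convexHull ℝ (range triVertex) := by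
  simp [tri, triVertex, Matrix.range_cons, Matrix.range_empty]

theorem affineIndependent_triVertex : AffineIndependent ℝ triVertex := by
  rw [affineIndependent_iff_of_fintype]
  intro w hw hsum
  rw [Finset.univ.weightedVSub_eq_linear_combination hw] at hsum
  have him : w 1 * (2 * √3) = 0 := by simpa [Fin.sum_univ_three, triVertex] using congrArg im hsum
  have hre : w 0 * 4 + w 1 * 2 = 0 := by
    simpa [Fin.sum_univ_three, triVertex] using congrArg re hsum
  have hw1 : w 1 = 0 := by simpa using him
  rw [Fin.sum_univ_three] at hw
  intro i
  fin_cases i <;> simp only [Fin.zero_eta, Fin.mk_one, Fin.reduceFinMk] <;> linarith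

noncomputable def triBasis : AffineBasis (Fin 3) ℝ ℂ :=
  ⟨triVertex, affineIndependent_triVertex,
    affineIndependent_triVertex.affineSpan_eq_top_iff_card_eq_finrank_add_one.2
      (by simp [Complex.finrank_real_complex])⟩

theorem coe_triBasis : ⇑triBasis = triVertex := rfl

noncomputable def mainCenter : Fin 5 → ℂ :=
  ![0, 4, 4, 4 / 3 * (1 + Real.sqrt 3 * I), 2 + 2 * Real.sqrt 3 * I]

noncomputable def mainRatio : Fin 5 → ℝ := ![1 / 4, 1 / 2, 1 / 4, 1 / 4, 1 / 4]

theorem mainS_eq_lineMap (i : Fin 5) (z : ℂ) :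
    mainS i z = AffineMap.lineMap (mainCenter i) z (mainRatio i) := by
  fin_cases i <;> simp [mainS, mainCenter, mainRatio, AffineMap.lineMap_apply_module] <;> ring

theorem contractingWith_mainS (i : Fin 5) : ContractingWith (1 / 2) (mainS i) := by
  refine ⟨by norm_num, LipschitzWith.of_dist_le_mul fun x y => ?_⟩
  have hsub : mainS i x - mainS i y = mainRatio i • (x - y) := by
    simp only [mainS_eq_lineMap, AffineMap.lineMap_apply_module]
    module
  rw [dist_eq_norm, hsub, norm_smul, dist_eq_norm]
  gcongr
  fin_cases i <;> norm_num [mainRatio]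

theorem convex_tri : Convex ℝ tri := convex_convexHull ℝ _

theorem triVertex_mem_tri (j : Fin 3) : triVertex j ∈ tri :=
  tri_eq_convexHull_range ▸ subset_convexHull ℝ _ (mem_range_self j)

theorem mainCenter_mem_tri (i : Fin 5) : mainCenter i ∈ tri := by
  fin_cases i
  · exact triVertex_mem_tri 2
  · exact triVertex_mem_tri 0
  · exact triVertex_mem_tri 0
  · convert convex_tri.lineMap_mem (triVertex_mem_tri 2) (triVertex_mem_tri 1)
      (t := (2 / 3 : ℝ)) ⟨by norm_num, by norm_num⟩ using 1
    simp only [mainCenter, triVertex, Matrix.cons_val, AffineMap.lineMap_apply_module,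
      Complex.real_smul]
    push_cast
    ring
  · exact triVertex_mem_tri 1

theorem mapsTo_mainS_tri (i : Fin 5) : MapsTo (mainS i) tri tri := fun z hz => by
  rw [mainS_eq_lineMap]
  exact convex_tri.lineMap_mem (mainCenter_mem_tri i) hz
    ⟨by fin_cases i <;> norm_num [mainRatio], by fin_cases i <;> norm_num [mainRatio]⟩

theorem isClosed_tri : IsClosed tri := (Set.toFinite _).isCompact_convexHull (𝕜 := ℝ) |>.isClosed

theorem tri_subset_halfPlanes :
    tri ⊆ {z : ℂ | 0 ≤ z.im ∧ z.im ≤ √3 * z.re ∧ z.im ≤ √3 * (4 - z.re)} := by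
  have h3 : 0 ≤ √3 := Real.sqrt_nonneg 3
  refine convexHull_min ?_ ?_
  · norm_num [insert_subset_iff, mul_comm]
  · rintro x ⟨hx1, hx2, hx3⟩ y ⟨hy1, hy2, hy3⟩ a b ha hb hab
    refine ⟨?_, ?_, ?_⟩ <;>
      simp only [Complex.add_im, Complex.add_re, Complex.smul_im, Complex.smul_re, smul_eq_mul] <;>
      nlinarith

section

variable {K : Set ℂ}

theorem IsAttractor.subset_tri (hK : IsAttractor mainS K) : K ⊆ tri :=
  hK.subset_of_mapsTo contractingWith_mainS isClosed_tri ⟨_, triVertex_mem_tri 0⟩ mapsTo_mainS_tri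

theorem IsAttractor.triVertex_mem (hK : IsAttractor mainS K) (j : Fin 3) : triVertex j ∈ K := by
  obtain ⟨i, hi⟩ : ∃ i, mainCenter i = triVertex j := by
    fin_cases j
    exacts [⟨1, rfl⟩, ⟨4, rfl⟩, ⟨0, rfl⟩]
  rw [← hi]
  exact hK.mem_of_isFixedPt (contractingWith_mainS i)
    (by rw [IsFixedPt, mainS_eq_lineMap, AffineMap.lineMap_same_apply])

theorem IsAttractor.convexHull_eq_tri (hK : IsAttractor mainS K) : convexHull ℝ K = tri :=
  (convexHull_min hK.subset_tri convex_tri).antisymm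
    (tri_eq_convexHull_range ▸ convexHull_mono (range_subset_iff.2 hK.triVertex_mem))

theorem IsAttractor.exists_mainS_eq (hK : IsAttractor mainS K) {z : ℂ} (hz : z ∈ K) :
    ∃ i y, (0 ≤ y.im ∧ y.im ≤ √3 * y.re ∧ y.im ≤ √3 * (4 - y.re)) ∧ mainS i y = z := by
  rw [hK.2.2] at hz
  obtain ⟨i, y, hy, rfl⟩ := mem_iUnion.1 hz
  exact ⟨i, y, tri_subset_halfPlanes (hK.subset_tri hy), rfl⟩

theorem IsAttractor.lineMap_triVertex_mem (hK : IsAttractor mainS K) {i j : Fin 3} (hij : i ≤ j) :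
    AffineMap.lineMap (triVertex i) (triVertex j) (3 / 8 : ℝ) ∈ K := by
  rcases hij.eq_or_lt with rfl | hij
  · rw [AffineMap.lineMap_same_apply]
    exact hK.triVertex_mem i
  fin_cases i <;> fin_cases j <;> simp at hij
  on_goal 1 => convert hK.mapsTo 1 (hK.mapsTo 4 (hK.triVertex_mem 0)) using 1
  on_goal 2 => convert hK.mapsTo 1 (hK.mapsTo 0 (hK.triVertex_mem 0)) using 1
  on_goal 3 => convert hK.mapsTo 3 (hK.mapsTo 3 (hK.triVertex_mem 2)) using 1
  all_goals
    simp only [triVertex, mainS, Matrix.cons_val, AffineMap.lineMap_apply_module, Complex.real_smul]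
    push_cast
    ring

theorem IsAttractor.lineMap_triVertex_notMem (hK : IsAttractor mainS K) {i j : Fin 3}
    (hij : j < i) : AffineMap.lineMap (triVertex i) (triVertex j) (3 / 8 : ℝ) ∉ K := by
  have h3 : 0 < √3 := by positivity
  intro h
  obtain ⟨k, y, ⟨hy1, hy2, hy3⟩, hy⟩ := hK.exists_mainS_eq h
  fin_cases i <;> fin_cases j <;> simp at hij <;> fin_cases k <;>
    simp [triVertex, mainS, AffineMap.lineMap_apply_module, Complex.ext_iff] at hy <;> nlinarith

end

/-- The only injective affine map of the plane with `f(K) = K` is the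
identity. -/
theorem stmt16 (K : Set ℂ) (hK : IsAttractor mainS K) :
    ∀ f : ℂ →ᵃ[ℝ] ℂ, Function.Injective f → f '' K = K → ⇑f = id := by
  intro f hf hfK
  have hftri : f '' tri = tri := by rw [← hK.convexHull_eq_tri, f.image_convexHull, hfK]
  have hvertex : ∀ i, ∃ j, f (triVertex i) = triVertex j := fun i => by
    have hext := f.mapsTo_extremePoints hf tri
      (tri_eq_convexHull_range ▸ triBasis.mem_extremePoints_convexHull i)
    rw [hftri, tri_eq_convexHull_range] at hext
    obtain ⟨j, hj⟩ := extremePoints_convexHull_subset hext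
    exact ⟨j, hj.symm⟩
  choose τ hτ using hvertex
  have hmono : Monotone τ := fun i j hij => by
    by_contra hlt
    have hmem := hfK ▸ mem_image_of_mem f (hK.lineMap_triVertex_mem hij)
    rw [f.apply_lineMap, hτ, hτ] at hmem
    exact hK.lineMap_triVertex_notMem (not_le.1 hlt) hmem
  have hinj : Injective τ := fun i j h =>
    affineIndependent_triVertex.injective (hf (by rw [hτ, hτ, h]))
  have hτid : τ = id := (hmono.strictMono_of_injective hinj).eq_id
  have hfid : f = AffineMap.id ℝ ℂ := AffineMap.ext_on triBasis.tot <| by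
    rintro _ ⟨i, rfl⟩
    simp [coe_triBasis, hτ, hτid]
  rw [hfid, AffineMap.coe_id]
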